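/- arXiv:1806.03165 — 5 statements merged into one kernel-verified Lean document; each statement's English description precedes it below -/
import Mathlib

section
/- Let C > 0 and let (u_k) be a nonnegative real sequence satisfying u_{k+1} ≤ -2C + 2C·√(1 + u_k/C) for all k ≥ 0. Then for all k ≥ 0, u_{k+1} ≤ max(8C, √(4C·u_0)) / (k+1). -/
/-!
Squaring `u (k+1) + 2C ≤ 2C √(1 + u k / C)` removes the square root: `v := u (k+1)` satisfies
`v (v + 4C) ≤ 4C u k`. This gives `v ≤ √(4C u₀)` for `k = 0`, and propagates a bound `u k ≤ M / K`
to `u (k+1) ≤ M / (K+1)` as soon as `M K ≥ 4C (K+1)`, which `M ≥ 8C` and `K ≥ 1` guarantee.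
-/

lemma mul_add_le_of_le_two_mul_sqrt_sub {C x y : ℝ} (hC : 0 < C) (hx : 0 ≤ x) (hy : 0 ≤ y)
    (h : y ≤ -2 * C + 2 * C * √(1 + x / C)) : y * (y + 4 * C) ≤ 4 * C * x := by
  have hsq : (2 * C * √(1 + x / C)) ^ 2 = 4 * C ^ 2 + 4 * C * x := by
    rw [mul_pow, Real.sq_sqrt (by positivity)]
    field_simp
    ring
  nlinarith

lemma le_sqrt_of_mul_add_le {C x y : ℝ} (hC : 0 ≤ C) (hy : 0 ≤ y)
    (h : y * (y + 4 * C) ≤ 4 * C * x) : y ≤ √(4 * C * x) :=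
  Real.le_sqrt_of_sq_le (by nlinarith)

lemma le_div_add_one_of_mul_add_le {C M K x y : ℝ} (hC : 0 ≤ C) (hM : 8 * C ≤ M) (hK : 1 ≤ K)
    (hx : x ≤ M / K) (h : y * (y + 4 * C) ≤ 4 * C * x) : y ≤ M / (K + 1) := by
  rw [le_div_iff₀ (by positivity)]
  rw [le_div_iff₀ (by positivity)] at hx
  by_contra! hlt
  set Y := y * (K + 1)
  have hM0 : 0 ≤ M := by linarith
  have hY : Y * (Y + 4 * C * (K + 1)) * K ≤ 4 * C * M * (K + 1) ^ 2 := by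
    have := mul_le_mul_of_nonneg_right h (by positivity : 0 ≤ K * (K + 1) ^ 2)
    nlinarith [mul_le_mul_of_nonneg_left hx (by positivity : 0 ≤ 4 * C * (K + 1) ^ 2)]
  have hMY : M * (M + 4 * C * (K + 1)) * K < Y * (Y + 4 * C * (K + 1)) * K := by
    gcongr
  have hMK : 4 * C * (K + 1) ≤ M * K := by nlinarith
  nlinarith [mul_le_mul_of_nonneg_left hMK hM0]

theorem stmt_0 (C : ℝ) (hC : 0 < C) (u : ℕ → ℝ)
    (hnn : ∀ k, 0 ≤ u k)
    (hrec : ∀ k, u (k + 1) ≤ -2 * C + 2 * C * Real.sqrt (1 + u k / C)) :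
    ∀ k : ℕ, u (k + 1) ≤ max (8 * C) (Real.sqrt (4 * C * u 0)) / (k + 1) := by
  have hstep (k : ℕ) : u (k + 1) * (u (k + 1) + 4 * C) ≤ 4 * C * u k :=
    mul_add_le_of_le_two_mul_sqrt_sub hC (hnn k) (hnn (k + 1)) (hrec k)
  intro k
  induction k with
  | zero =>
    simpa using (le_sqrt_of_mul_add_le hC.le (hnn 1) (hstep 0)).trans (le_max_right _ _)
  | succ k ih =>
    push_cast
    exact le_div_add_one_of_mul_add_le hC.le (le_max_left _ _) (by simp) ih (hstep (k + 1))
end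

section
/- Let A be a positive semidefinite symmetric n×n real matrix. Then for all vectors x, y, z ∈ ℝⁿ, ⟨x - z, A z - A y⟩ ≤ (1/4)·(x - y)ᵀ A (x - y). -/
open Matrix

namespace Matrix

variable {ι R : Type*} [Fintype ι]

theorem IsSymm.dotProduct_mulVec_comm [CommSemiring R] {A : Matrix ι ι R} (hA : A.IsSymm)
    (x y : ι → R) : x ⬝ᵥ A *ᵥ y = y ⬝ᵥ A *ᵥ x := by
  conv_lhs => rw [← hA.eq]
  exact dotProduct_transpose_mulVec A x y

theorem IsSymm.add_dotProduct_mulVec_sub [CommRing R] {A : Matrix ι ι R} (hA : A.IsSymm)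
    (d u : ι → R) :
    (d + u) ⬝ᵥ A *ᵥ (d - u) = d ⬝ᵥ A *ᵥ d - u ⬝ᵥ A *ᵥ u := by
  rw [mulVec_sub, add_dotProduct, dotProduct_sub, dotProduct_sub, hA.dotProduct_mulVec_comm u d]
  abel

theorem PosSemidef.dotProduct_mulVec_nonneg_real {A : Matrix ι ι ℝ} (hA : A.PosSemidef)
    (x : ι → ℝ) : 0 ≤ x ⬝ᵥ A *ᵥ x := by
  simpa only [star_trivial] using hA.dotProduct_mulVec_nonneg x

/-- Write `x - z = d + u` and `z - y = d - u` with `d = (x - y)/2` and `u = (x + y)/2 - z`;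
the left side is then `‖d‖_A² - ‖u‖_A²`. -/
theorem PosSemidef.sub_dotProduct_mulVec_sub_le {A : Matrix ι ι ℝ} (hA : A.PosSemidef)
    (x y z : ι → ℝ) :
    (x - z) ⬝ᵥ (A *ᵥ z - A *ᵥ y) ≤ (1 / 4) * ((x - y) ⬝ᵥ A *ᵥ (x - y)) := by
  set d : ι → ℝ := (2 : ℝ)⁻¹ • (x - y)
  set u : ι → ℝ := (2 : ℝ)⁻¹ • (x + y) - z
  have hxz : x - z = d + u := by simp only [d, u]; module
  have hzy : A *ᵥ z - A *ᵥ y = A *ᵥ (d - u) := by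
    rw [← mulVec_sub]; congr 1; simp only [d, u]; module
  have hsymm : A.IsSymm := isHermitian_iff_isSymm.mp hA.1
  calc (x - z) ⬝ᵥ (A *ᵥ z - A *ᵥ y) = d ⬝ᵥ A *ᵥ d - u ⬝ᵥ A *ᵥ u := by
        rw [hxz, hzy, hsymm.add_dotProduct_mulVec_sub]
    _ ≤ d ⬝ᵥ A *ᵥ d := sub_le_self _ (hA.dotProduct_mulVec_nonneg_real u)
    _ = (1 / 4) * ((x - y) ⬝ᵥ A *ᵥ (x - y)) := by
        simp only [d, mulVec_smul, dotProduct_smul, smul_dotProduct, smul_eq_mul]; ring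

end Matrix

theorem stmt_1 (n : ℕ) (A : Matrix (Fin n) (Fin n) ℝ)
    (hA : A.PosSemidef) :
    ∀ x y z : Fin n → ℝ,
      (x - z) ⬝ᵥ (A.mulVec z - A.mulVec y) ≤
        (1 / 4) * ((x - y) ⬝ᵥ A.mulVec (x - y)) :=
  hA.sub_dotProduct_mulVec_sub_le
end

section
/- For λ > 0, B > 0, and w ∈ ℝ with w² ≠ 2λB, the minimizer of t ↦ (1/2)B t² + w t + λ·[t ≠ 0] over ℝ (where [t ≠ 0] equals 1 if t ≠ 0 and 0 otherwise) is t* = -w/B if w² > 2λB and t* = 0 if w² < 2λB. -/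
/-!
Completing the square, `B t² / 2 + w t = B (t + w / B)² / 2 - w² / (2B)`, so off the origin the
objective is at least `λ - w² / (2B)`, with equality at `t = -w / B`, while at the origin it is `0`.
The minimum value is therefore `min 0 (λ - w² / (2B))`, and hard thresholding at `w² = 2λB` picks
the point attaining it.
-/

namespace HardThreshold

noncomputable def l0Objective (lam B w t : ℝ) : ℝ :=
  (1 / 2) * B * t ^ 2 + w * t + (if t ≠ 0 then lam else 0)

noncomputable def hardThreshold (lam B w : ℝ) : ℝ :=
  if w ^ 2 > 2 * lam * B then -w / B else 0

variable {lam B w : ℝ}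

theorem quadratic_eq_sq_sub (hB : B ≠ 0) (t : ℝ) :
    (1 / 2) * B * t ^ 2 + w * t = (1 / 2) * B * (t + w / B) ^ 2 - w ^ 2 / (2 * B) := by
  field_simp
  ring

theorem l0Objective_zero : l0Objective lam B w 0 = 0 := by
  simp [l0Objective]

theorem sub_le_l0Objective_of_ne_zero (hB : 0 < B) {t : ℝ} (ht : t ≠ 0) :
    lam - w ^ 2 / (2 * B) ≤ l0Objective lam B w t := by
  have hsq : 0 ≤ (1 / 2) * B * (t + w / B) ^ 2 := by positivity
  rw [l0Objective, if_pos ht, quadratic_eq_sq_sub hB.ne']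
  linarith

theorem l0Objective_neg_div (hB : B ≠ 0) (hw : w ≠ 0) :
    l0Objective lam B w (-w / B) = lam - w ^ 2 / (2 * B) := by
  have hne : -w / B ≠ 0 := div_ne_zero (neg_ne_zero.mpr hw) hB
  rw [l0Objective, if_pos hne, quadratic_eq_sq_sub hB]
  ring

theorem min_le_l0Objective (hB : 0 < B) (t : ℝ) :
    min 0 (lam - w ^ 2 / (2 * B)) ≤ l0Objective lam B w t := by
  rcases eq_or_ne t 0 with rfl | ht
  · exact l0Objective_zero.symm ▸ min_le_left _ _
  · exact (min_le_right _ _).trans (sub_le_l0Objective_of_ne_zero hB ht)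

theorem sub_neg_iff_sq_gt (hB : 0 < B) : lam - w ^ 2 / (2 * B) < 0 ↔ w ^ 2 > 2 * lam * B := by
  rw [sub_neg, lt_div_iff₀ (by positivity), gt_iff_lt]
  constructor <;> intro h <;> linarith

theorem l0Objective_hardThreshold (hlam : 0 < lam) (hB : 0 < B) :
    l0Objective lam B w (hardThreshold lam B w) = min 0 (lam - w ^ 2 / (2 * B)) := by
  unfold hardThreshold
  split_ifs with h
  · have hw : w ≠ 0 := by
      rintro rfl
      nlinarith
    rw [l0Objective_neg_div hB.ne' hw, min_eq_right ((sub_neg_iff_sq_gt hB).mpr h).le]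
  · rw [l0Objective_zero, min_eq_left (not_lt.mp (mt (sub_neg_iff_sq_gt hB).mp h))]

end HardThreshold

theorem stmt_10_general (lam B w : ℝ) (hlam : 0 < lam) (hB : 0 < B) :
    ∀ t : ℝ,
      (1 / 2) * B * (if w ^ 2 > 2 * lam * B then -w / B else 0) ^ 2
        + w * (if w ^ 2 > 2 * lam * B then -w / B else 0)
        + (if (if w ^ 2 > 2 * lam * B then -w / B else 0) ≠ 0 then lam else 0)
      ≤ (1 / 2) * B * t ^ 2 + w * t + (if t ≠ 0 then lam else 0) := fun t =>
  show HardThreshold.l0Objective lam B w (HardThreshold.hardThreshold lam B w) ≤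
      HardThreshold.l0Objective lam B w t from
    HardThreshold.l0Objective_hardThreshold hlam hB ▸ HardThreshold.min_le_l0Objective hB t

theorem stmt_10 (lam B w : ℝ) (hlam : 0 < lam) (hB : 0 < B)
    (hne : w ^ 2 ≠ 2 * lam * B) :
    ∀ t : ℝ,
      (1 / 2) * B * (if w ^ 2 > 2 * lam * B then -w / B else 0) ^ 2
        + w * (if w ^ 2 > 2 * lam * B then -w / B else 0)
        + (if (if w ^ 2 > 2 * lam * B then -w / B else 0) ≠ 0 then lam else 0)
      ≤ (1 / 2) * B * t ^ 2 + w * t + (if t ≠ 0 then lam else 0) :=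
  stmt_10_general lam B w hlam hB
end

section
/- Let A = L + D + Lᵀ be a symmetric positive semidefinite n×n matrix with D its diagonal part (having positive diagonal entries) and L its strictly lower-triangular part. Let B = L + (1/ω)D + εI with ω ∈ (0,2) and ε ≥ 0, and set δ = (1/ω - 1/2)·min_i D_{ii} + ε. If δ > 0, then for all v ∈ ℝⁿ, vᵀBv ≥ δ‖v‖₂². -/
open Matrix

/-! Positive semidefiniteness of `A = L + D + Lᵀ` together with `vᵀLᵀv = vᵀLv` gives
`2 vᵀLv ≥ -vᵀDv`, hence `vᵀBv ≥ (1/ω - 1/2) vᵀDv + ε‖v‖²`,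
and `vᵀDv ≥ (min D_ii) ‖v‖²`. -/

namespace Matrix

variable {ι : Type*} [Fintype ι]

theorem dotProduct_transpose_mulVec_self {R : Type*} [CommSemiring R] (L : Matrix ι ι R)
    (v : ι → R) : v ⬝ᵥ Lᵀ *ᵥ v = v ⬝ᵥ L *ᵥ v := by
  rw [mulVec_transpose, dotProduct_comm, ← dotProduct_mulVec]

theorem IsDiag.mul_dotProduct_self_le [DecidableEq ι] {R : Type*} [CommRing R] [LinearOrder R]
    [IsStrictOrderedRing R] {D : Matrix ι ι R} (hD : D.IsDiag) {m : R} (hm : ∀ i, m ≤ D i i)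
    (v : ι → R) : m * (v ⬝ᵥ v) ≤ v ⬝ᵥ D *ᵥ v := by
  rw [← hD.diagonal_diag]
  simp only [dotProduct, mulVec_diagonal, Finset.mul_sum, diag_apply]
  refine Finset.sum_le_sum fun i _ => ?_
  calc m * (v i * v i) ≤ D i i * (v i * v i) :=
      mul_le_mul_of_nonneg_right (hm i) (mul_self_nonneg _)
    _ = v i * (D i i * v i) := by ring

theorem PosSemidef.neg_dotProduct_mulVec_le_two_mul {L D : Matrix ι ι ℝ}
    (hA : (L + D + Lᵀ).PosSemidef) (v : ι → ℝ) :
    -(v ⬝ᵥ D *ᵥ v) ≤ 2 * (v ⬝ᵥ L *ᵥ v) := by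
  have h := hA.dotProduct_mulVec_nonneg v
  simp only [star_trivial, add_mulVec, dotProduct_add, dotProduct_transpose_mulVec_self] at h
  linarith

theorem PosSemidef.le_dotProduct_mulVec_add_smul_add_smul_one [DecidableEq ι]
    {L D : Matrix ι ι ℝ} (hA : (L + D + Lᵀ).PosSemidef) (hD : D.IsDiag) {m c : ℝ}
    (hm : ∀ i, m ≤ D i i) (hc : 1 / 2 ≤ c) (ε : ℝ) (v : ι → ℝ) :
    ((c - 1 / 2) * m + ε) * (v ⬝ᵥ v) ≤ v ⬝ᵥ (L + c • D + ε • 1) *ᵥ v := by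
  have hL := hA.neg_dotProduct_mulVec_le_two_mul v
  have hDm := mul_le_mul_of_nonneg_left (hD.mul_dotProduct_self_le hm v) (sub_nonneg.2 hc)
  simp only [add_mulVec, smul_mulVec, one_mulVec, dotProduct_add, dotProduct_smul, smul_eq_mul]
  linarith

end Matrix

theorem stmt_13_general (n : ℕ) (hn : 0 < n)
    (A L D : Matrix (Fin n) (Fin n) ℝ)
    (hA : A.PosSemidef)
    (hsplit : A = L + D + Lᵀ)
    (hDdiag : ∀ i j, i ≠ j → D i j = 0)
    (ω ε : ℝ) (hω : ω ∈ Set.Ioo (0 : ℝ) 2)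
    (B : Matrix (Fin n) (Fin n) ℝ)
    (hB : B = L + (1 / ω) • D + ε • (1 : Matrix (Fin n) (Fin n) ℝ))
    (δ : ℝ)
    (hδ : δ = (1 / ω - 1 / 2) *
      Finset.univ.inf' (Finset.univ_nonempty_iff.mpr (Fin.pos_iff_nonempty.mp hn))
        (fun i => D i i) + ε) :
    ∀ v : Fin n → ℝ, δ * (v ⬝ᵥ v) ≤ v ⬝ᵥ B.mulVec v := by
  intro v
  subst hsplit hB hδ
  have hω' : 1 / 2 ≤ 1 / ω := one_div_le_one_div_of_le hω.1 hω.2.le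
  exact hA.le_dotProduct_mulVec_add_smul_add_smul_one hDdiag
    (fun i => Finset.inf'_le _ (Finset.mem_univ i)) hω' ε v

theorem stmt_13 (n : ℕ) (hn : 0 < n)
    (A L D : Matrix (Fin n) (Fin n) ℝ)
    (hA : A.PosSemidef)
    (hsplit : A = L + D + Lᵀ)
    (hDdiag : ∀ i j, i ≠ j → D i j = 0)
    (hDpos : ∀ i, 0 < D i i)
    (hLlow : ∀ i j : Fin n, i ≤ j → L i j = 0)
    (ω ε : ℝ) (hω : ω ∈ Set.Ioo (0 : ℝ) 2) (hε : 0 ≤ ε)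
    (B : Matrix (Fin n) (Fin n) ℝ)
    (hB : B = L + (1 / ω) • D + ε • (1 : Matrix (Fin n) (Fin n) ℝ))
    (δ : ℝ)
    (hδ : δ = (1 / ω - 1 / 2) *
      Finset.univ.inf' (Finset.univ_nonempty_iff.mpr (Fin.pos_iff_nonempty.mp hn))
        (fun i => D i i) + ε)
    (hδpos : 0 < δ) :
    ∀ v : Fin n → ℝ, δ * (v ⬝ᵥ v) ≤ v ⬝ᵥ B.mulVec v :=
  stmt_13_general n hn A L D hA hsplit hDdiag ω ε hω B hB δ hδ
end

section
/- Let (u_k) be a nonnegative sequence and C₂, C₃ > 0 constants such that u_{k+1} ≤ C₂√(u_k - u_{k+1}) + C₃(u_k - u_{k+1}) and u_{k+1} ≤ u_k for all k. If for some k one has √(u_k - u_{k+1}) ≥ C₂/C₃, then u_{k+1} ≤ (2C₃/(2C₃+1))·u_k. -/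
lemma mul_sqrt_le_mul_of_div_le_sqrt {c₂ c₃ d : ℝ} (hc₃ : 0 < c₃) (hd : 0 ≤ d)
    (h : c₂ / c₃ ≤ √d) : c₂ * √d ≤ c₃ * d := by
  have hc₂ : c₂ ≤ c₃ * √d := by rwa [div_le_iff₀' hc₃] at h
  calc c₂ * √d ≤ c₃ * √d * √d := mul_le_mul_of_nonneg_right hc₂ (Real.sqrt_nonneg d)
    _ = c₃ * d := by rw [mul_assoc, Real.mul_self_sqrt hd]

lemma le_div_add_one_mul_of_le_mul_sub {a b c : ℝ} (hc : 0 ≤ c) (h : b ≤ c * (a - b)) :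
    b ≤ c / (c + 1) * a := by
  rw [div_mul_eq_mul_div, le_div_iff₀ (by linarith)]
  linarith

/-- Once the step `a - b` is so large that `√(a - b) ≥ C₂ / C₃`, the square-root term is dominated
by the linear one, and the recursion becomes a geometric contraction. -/
lemma le_mul_of_le_mul_sqrt_sub_add_mul_sub {a b C₂ C₃ : ℝ} (hC₃ : 0 < C₃) (hba : b ≤ a)
    (hrec : b ≤ C₂ * √(a - b) + C₃ * (a - b)) (hstep : C₂ / C₃ ≤ √(a - b)) :
    b ≤ 2 * C₃ / (2 * C₃ + 1) * a := by
  have hsqrt := mul_sqrt_le_mul_of_div_le_sqrt hC₃ (sub_nonneg.2 hba) hstep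
  exact le_div_add_one_mul_of_le_mul_sub (by positivity) (by linarith)

theorem stmt_14_general (u : ℕ → ℝ) (C₂ C₃ : ℝ) (hC₃ : 0 < C₃)
    (hmono : ∀ k, u (k + 1) ≤ u k)
    (hrec : ∀ k, u (k + 1) ≤ C₂ * Real.sqrt (u k - u (k + 1)) + C₃ * (u k - u (k + 1)))
    (k : ℕ) (hk : C₂ / C₃ ≤ Real.sqrt (u k - u (k + 1))) :
    u (k + 1) ≤ (2 * C₃ / (2 * C₃ + 1)) * u k :=
  le_mul_of_le_mul_sqrt_sub_add_mul_sub hC₃ (hmono k) (hrec k) hk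

theorem stmt_14 (u : ℕ → ℝ) (C₂ C₃ : ℝ) (hC₂ : 0 < C₂) (hC₃ : 0 < C₃)
    (hnn : ∀ k, 0 ≤ u k)
    (hmono : ∀ k, u (k + 1) ≤ u k)
    (hrec : ∀ k, u (k + 1) ≤ C₂ * Real.sqrt (u k - u (k + 1)) + C₃ * (u k - u (k + 1)))
    (k : ℕ) (hk : C₂ / C₃ ≤ Real.sqrt (u k - u (k + 1))) :
    u (k + 1) ≤ (2 * C₃ / (2 * C₃ + 1)) * u k :=
  stmt_14_general u C₂ C₃ hC₃ hmono hrec k hk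
end
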